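/- Let V' ⊆ V and let ρ̃ denote associated densities with respect to the density-based decomposition of V'. If an element u ∉ V' is added to V', then for every v ∈ V, the new associated density satisfies ρ̃^new_M(v) ≥ ρ̃^old_M(v); that is, adding an element can only increase associated densities. -/

import Mathlib

open Matroid Set ENNReal
namespace MatroidDCS
variable {α : Type*}

/-- The rank of a set in a matroid: supremum of sizes of independent subsets. -/
noncomputable def er (M : Matroid α) (X : Set α) : ℕ∞ :=
  ⨆ I ∈ {I : Set α | M.Indep I ∧ I ⊆ X}, I.encard

/-- Contraction of a matroid by a set, defined via the dual. -/
noncomputable def contract (M : Matroid α) (C : Set α) : Matroid α := (M✶ ↾ (M.E \ C))✶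

/-- A matroid has no loops: every singleton of the ground set is independent. -/
def Loopless (M : Matroid α) : Prop := ∀ v ∈ M.E, M.Indep {v}

/-- Density of a set in a matroid, valued in `ℝ≥0∞` (so `∅` has density 0 and a
nonempty set of rank 0 has density `⊤`). -/
noncomputable def dens (M : Matroid α) (U : Set α) : ℝ≥0∞ :=
  (U.encard : ℝ≥0∞) / (er M U : ℝ≥0∞)

/-- Union of the first `j` pieces of a decomposition. -/
def pre (U : ℕ → Set α) (j : ℕ) : Set α := ⋃ i ∈ Finset.range j, U i

/-- `W` is the maximum-cardinality densest subset of `M`. -/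
def IsMaxDensest (M : Matroid α) (W : Set α) : Prop :=
  W ⊆ M.E ∧ (∀ X ⊆ M.E, dens M X ≤ dens M W) ∧
    ∀ X ⊆ M.E, dens M X = dens M W → X.encard ≤ W.encard

/-- `U 0, …, U (k-1)` is the greedy density-based decomposition of the ground set of `M'`. -/
structure IsDensityDecomp (M' : Matroid α) (k : ℕ) (U : ℕ → Set α) : Prop where
  cover : pre U k = M'.E
  densest : ∀ j < k, IsMaxDensest (contract M' (pre U j)) (U j)

open Classical in
/-- Associated density of an element `v` with respect to the decomposition `U` of `V'`. -/
noncomputable def assocDens (M : Matroid α) (V' : Set α) (k : ℕ) (U : ℕ → Set α) (v : α) :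
    ℝ≥0∞ :=
  if h : ∃ j, j < k ∧ v ∈ M.closure (pre U (j + 1)) then
    dens (contract (M ↾ V') (pre U (Nat.find h))) (U (Nat.find h))
  else 0

/-- Size of a maximum common independent set within `S`. -/
noncomputable def mu (M₁ M₂ : Matroid α) (S : Set α) : ℕ∞ :=
  ⨆ I ∈ {I : Set α | I ⊆ S ∧ M₁.Indep I ∧ M₂.Indep I}, I.encard




section Aux
variable {M : Matroid α} {X Y I C B R : Set α}


lemma le_er_of_indep (hI : M.Indep I) (hIX : I ⊆ X) : I.encard ≤ er M X :=
  le_iSup₂ (f := fun (J : Set α) (_ : J ∈ {I : Set α | M.Indep I ∧ I ⊆ X}) => J.encard)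
    I ⟨hI, hIX⟩

lemma er_eq_encard_of_basis' (hI : M.IsBasis' I X) : er M X = I.encard := by
  refine le_antisymm (iSup₂_le fun J hJ => ?_) (le_er_of_indep hI.indep hI.subset)
  obtain ⟨K, hK, hJK⟩ := hJ.1.subset_isBasis'_of_subset hJ.2
  exact (Set.encard_le_encard hJK).trans (hK.encard_eq_encard hI).le

lemma er_mono (h : X ⊆ Y) : er M X ≤ er M Y :=
  iSup₂_le fun _ hJ => le_er_of_indep hJ.1 (hJ.2.trans h)

lemma er_indep (hI : M.Indep I) : er M I = I.encard :=
  er_eq_encard_of_basis' hI.isBasis_self.isBasis'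

@[simp] lemma er_empty : er M (∅ : Set α) = 0 := by
  simpa using er_indep M.empty_indep

lemma er_ne_top [M.Finite] : er M X ≠ ⊤ := by
  obtain ⟨I, hI⟩ := M.exists_isBasis' X
  rw [er_eq_encard_of_basis' hI]
  exact (M.set_finite I hI.indep.subset_ground).encard_lt_top.ne

lemma er_union_eq_of_subset_closure (h : X ⊆ M.closure Y) (hY : Y ⊆ M.E) :
    er M (X ∪ Y) = er M Y := by
  obtain ⟨I, hI⟩ := M.exists_isBasis Y hY
  have hB : M.IsBasis I (X ∪ Y) := by
    rw [isBasis_iff_indep_subset_closure]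
    exact ⟨hI.indep, hI.subset.trans subset_union_right,
      union_subset (h.trans_eq hI.closure_eq_closure.symm) hI.subset_closure⟩
  rw [er_eq_encard_of_basis' hB.isBasis', er_eq_encard_of_basis' hI.isBasis']

lemma er_insert_eq_of_mem_closure {v : α} (h : v ∈ M.closure Y) (hY : Y ⊆ M.E) :
    er M (insert v Y) = er M Y := by
  rw [← singleton_union]
  exact er_union_eq_of_subset_closure (by simpa using h) hY

lemma er_insert_of_not_mem_closure {v : α} (hv : v ∈ M.E) (h : v ∉ M.closure Y)
    (hY : Y ⊆ M.E) : er M (insert v Y) = er M Y + 1 := by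
  obtain ⟨I, hI⟩ := M.exists_isBasis Y hY
  have hvI : v ∉ I := fun hvI => h (by
    rw [← hI.closure_eq_closure]; exact M.mem_closure_of_mem hvI hI.indep.subset_ground)
  have hind : M.Indep (insert v I) := by
    rw [hI.indep.insert_indep_iff]
    exact Or.inl ⟨hv, fun hc => h (hI.closure_eq_closure ▸ hc)⟩
  have hB : M.IsBasis (insert v I) (insert v Y) := by
    rw [isBasis_iff_indep_subset_closure]
    refine ⟨hind, insert_subset_insert hI.subset, insert_subset
      (M.subset_closure _ hind.subset_ground (mem_insert _ _)) ?_⟩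
    exact hI.subset_closure.trans (M.closure_subset_closure (subset_insert _ _))
  rw [er_eq_encard_of_basis' hB.isBasis', er_eq_encard_of_basis' hI.isBasis',
    Set.encard_insert_of_notMem hvI]

lemma er_submod (hX : X ⊆ M.E) (hY : Y ⊆ M.E) :
    er M (X ∪ Y) + er M (X ∩ Y) ≤ er M X + er M Y := by
  obtain ⟨I, hI⟩ := M.exists_isBasis (X ∩ Y) ((inter_subset_left).trans hX)
  obtain ⟨K, hK, hIK⟩ := hI.indep.subset_isBasis_of_subset
    (hI.subset.trans ((inter_subset_left).trans subset_union_left)) (union_subset hX hY)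
  rw [er_eq_encard_of_basis' hK.isBasis', er_eq_encard_of_basis' hI.isBasis']
  have h1 : (K ∩ X).encard ≤ er M X := le_er_of_indep (hK.indep.subset inter_subset_left)
    inter_subset_right
  have h2 : (K ∩ Y).encard ≤ er M Y := le_er_of_indep (hK.indep.subset inter_subset_left)
    inter_subset_right
  have hu : (K ∩ X) ∪ (K ∩ Y) = K := by
    rw [← inter_union_distrib_left]; exact inter_eq_self_of_subset_left hK.subset
  have hi : I ⊆ (K ∩ X) ∩ (K ∩ Y) := by
    rw [← inter_inter_distrib_left]
    exact subset_inter hIK hI.subset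
  calc K.encard + I.encard ≤ ((K ∩ X) ∪ (K ∩ Y)).encard + ((K ∩ X) ∩ (K ∩ Y)).encard := by
        rw [hu]; exact add_le_add_right (Set.encard_le_encard hi) _
    _ = (K ∩ X).encard + (K ∩ Y).encard := Set.encard_union_add_encard_inter _ _
    _ ≤ er M X + er M Y := add_le_add h1 h2

@[simp] lemma contract_ground : (contract M C).E = M.E \ C := rfl

lemma contract_base_iff (hC : C ⊆ M.E) :
    (contract M C).IsBase B ↔ ∃ B', M.IsBase B' ∧ M.IsBasis (B' ∩ C) C ∧ B = B' \ C := by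
  rw [contract, dual_isBase_iff']
  simp only [restrict_ground_eq, isBase_restrict_iff', dual_ground]
  constructor
  · rintro ⟨hD, hB⟩
    have hDb : M✶.IsBasis ((M.E \ C) \ B) (M.E \ C) := hD.isBasis diff_subset
    obtain ⟨B₀, hB₀, hDB₀⟩ := hDb.indep.exists_isBase_superset
    have hD0 : (M.E \ C) \ B = B₀ ∩ (M.E \ C) :=
      hD.eq_of_subset_indep (hB₀.indep.subset inter_subset_left)
        (subset_inter hDB₀ diff_subset) inter_subset_right
    have hX : (M.E \ C) = M✶.E \ C := by rw [dual_ground]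
    have hiff := hB₀.inter_isBasis_iff_compl_inter_isBasis_dual (X := M.E \ C)
      (by rw [dual_ground]; exact diff_subset)
    rw [← hD0] at hiff
    have h2 := hiff.mp hDb
    rw [dual_dual, dual_ground, diff_diff_cancel_left hC] at h2
    refine ⟨M.E \ B₀, hB₀.compl_isBase_of_dual, h2, ?_⟩
    have : (M.E \ B₀) \ C = (M.E \ C) \ B₀ := by
      ext x; simp only [mem_diff]; tauto
    rw [this]
    have : (M.E \ C) \ B₀ = (M.E \ C) \ (B₀ ∩ (M.E \ C)) := by
      ext x; simp only [mem_diff, mem_inter_iff]; tauto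
    rw [this, ← hD0, diff_diff_cancel_left hB]
  · rintro ⟨B', hB', hbas, rfl⟩
    have h1 := hB'.compl_inter_isBasis_of_inter_isBasis hbas
    have he : (M.E \ B') ∩ (M.E \ C) = (M.E \ C) \ (B' \ C) := by
      ext x; simp only [mem_inter_iff, mem_diff]; tauto
    rw [he] at h1
    exact ⟨h1.isBasis', fun x hx => ⟨hB'.subset_ground hx.1, hx.2⟩⟩

lemma contract_indep_iff (hC : C ⊆ M.E) :
    (contract M C).Indep I ↔ ∃ B', M.IsBase B' ∧ M.IsBasis (B' ∩ C) C ∧ I ⊆ B' \ C := by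
  rw [indep_iff]
  constructor
  · rintro ⟨B, hB, hIB⟩
    obtain ⟨B', h1, h2, rfl⟩ := (contract_base_iff hC).mp hB
    exact ⟨B', h1, h2, hIB⟩
  · rintro ⟨B', h1, h2, hIB⟩
    exact ⟨B' \ C, (contract_base_iff hC).mpr ⟨B', h1, h2, rfl⟩, hIB⟩


lemma er_contract_add (hC : C ⊆ M.E) (hX : X ⊆ M.E \ C) :
    er (contract M C) X + er M C = er M (X ∪ C) := by
  refine le_antisymm ?_ ?_
  · obtain ⟨I, hI⟩ := (contract M C).exists_isBasis' X
    rw [er_eq_encard_of_basis' hI]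
    obtain ⟨B', hB', hbas, hIB⟩ := (contract_indep_iff hC).mp hI.indep
    rw [er_eq_encard_of_basis' hbas.isBasis']
    have hdisj : Disjoint I (B' ∩ C) :=
      disjoint_of_subset_left hIB (disjoint_sdiff_left.mono_right inter_subset_right)
    rw [← Set.encard_union_eq hdisj]
    refine le_er_of_indep (hB'.indep.subset (union_subset (hIB.trans diff_subset)
      inter_subset_left)) (union_subset (hI.subset.trans subset_union_left)
      (inter_subset_right.trans subset_union_right))
  · obtain ⟨J, hJ⟩ := M.exists_isBasis C hC
    obtain ⟨K, hK, hJK⟩ := hJ.indep.subset_isBasis_of_subset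
      (hJ.subset.trans subset_union_right)
      (union_subset (hX.trans diff_subset) hC)
    rw [er_eq_encard_of_basis' hK.isBasis', er_eq_encard_of_basis' hJ.isBasis']
    have hKC : K ∩ C = J := (hJ.eq_of_subset_indep (hK.indep.subset inter_subset_left)
      (subset_inter hJK hJ.subset) inter_subset_right).symm
    obtain ⟨B', hB', hKB'⟩ := hK.indep.exists_isBase_superset
    have hB'C : M.IsBasis (B' ∩ C) C := by
      have : B' ∩ C = J := (hJ.eq_of_subset_indep (hB'.indep.subset inter_subset_left)
        (subset_inter (hJK.trans hKB') hJ.subset) inter_subset_right).symm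
      rwa [this]
    have hKCi : (contract M C).Indep (K \ C) := (contract_indep_iff hC).mpr
      ⟨B', hB', hB'C, diff_subset_diff_left hKB'⟩
    have h1 : (K \ C).encard ≤ er (contract M C) X := by
      refine le_er_of_indep hKCi ?_
      rw [diff_subset_iff, union_comm]
      exact hK.subset
    calc K.encard = (K \ C).encard + (K ∩ C).encard := (Set.encard_diff_add_encard_inter _ _).symm
      _ = (K \ C).encard + J.encard := by rw [hKC]
      _ ≤ er (contract M C) X + J.encard := add_le_add_left h1 _
lemma er_restrict (hX : X ⊆ R) : er (M ↾ R) X = er M X := by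
  unfold er
  apply le_antisymm <;> refine iSup₂_le fun J hJ => ?_
  · exact le_iSup₂ (f := fun (J : Set α) (_ : J ∈ {I : Set α | M.Indep I ∧ I ⊆ X}) => J.encard)
      J ⟨(restrict_indep_iff.mp hJ.1).1, hJ.2⟩
  · exact le_iSup₂
      (f := fun (J : Set α) (_ : J ∈ {I : Set α | (M ↾ R).Indep I ∧ I ⊆ X}) => J.encard)
      J ⟨restrict_indep_iff.mpr ⟨hJ.1, hJ.2.trans hX⟩, hJ.2⟩

@[simp] lemma dens_empty : dens M (∅ : Set α) = 0 := by
  simp [dens]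

lemma closure_empty_of_loopless (hM : Loopless M) : M.closure (∅ : Set α) = ∅ := by
  ext v
  simp only [mem_empty_iff_false, iff_false]
  intro hv
  have hvE : v ∈ M.E := M.closure_subset_ground _ hv
  have := (hM v hvE).subset_ground
  rw [(M.empty_indep).mem_closure_iff] at hv
  rcases hv with h | h
  · exact h.not_indep (by simpa using hM v hvE)
  · exact h

/-- `pre` basics -/
lemma pre_zero (U : ℕ → Set α) : pre U 0 = ∅ := by simp [pre]

lemma pre_succ (U : ℕ → Set α) (j : ℕ) : pre U (j + 1) = U j ∪ pre U j := by
  simp [pre, Finset.range_add_one, Set.biUnion_insert]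

lemma pre_mono (U : ℕ → Set α) {i j : ℕ} (h : i ≤ j) : pre U i ⊆ pre U j := by
  intro x hx
  simp only [pre, mem_iUnion, Finset.mem_range, exists_prop] at *
  obtain ⟨i0, hi0, hx⟩ := hx
  exact ⟨i0, by omega, hx⟩

/-- cross-multiplication helpers -/
lemma enn_ne_zero {b : ℕ∞} (hb : b ≠ 0) : (b : ℝ≥0∞) ≠ 0 :=
  fun h => hb (by exact_mod_cast h)

lemma enn_ne_top {b : ℕ∞} (hb : b ≠ ⊤) : (b : ℝ≥0∞) ≠ ⊤ :=
  fun h => hb (by rw [← ENat.toENNReal_top] at h; exact_mod_cast h)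

lemma ediv_le_ediv_iff_cross {a b c d : ℕ∞}
    (hb0 : b ≠ 0) (hbt : b ≠ ⊤) (hd0 : d ≠ 0) (hdt : d ≠ ⊤) :
    (a : ℝ≥0∞) / b ≤ (c : ℝ≥0∞) / d ↔ a * d ≤ c * b := by
  rw [ENNReal.le_div_iff_mul_le (Or.inl (enn_ne_zero hd0)) (Or.inl (enn_ne_top hdt)),
    div_eq_mul_inv, mul_right_comm, ← div_eq_mul_inv,
    ENNReal.div_le_iff (enn_ne_zero hb0) (enn_ne_top hbt)]
  constructor
  · intro h
    have : ((a * d : ℕ∞) : ℝ≥0∞) ≤ ((c * b : ℕ∞) : ℝ≥0∞) := by push_cast; exact h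
    exact_mod_cast this
  · intro h
    have : ((a * d : ℕ∞) : ℝ≥0∞) ≤ ((c * b : ℕ∞) : ℝ≥0∞) := by exact_mod_cast h
    push_cast at this
    exact this

lemma cross_of_div_le {a b c d : ℕ∞} (h : (a : ℝ≥0∞) / b ≤ (c : ℝ≥0∞) / d)
    (hb0 : b ≠ 0) (hbt : b ≠ ⊤) (hd0 : d ≠ 0) (hdt : d ≠ ⊤) : a * d ≤ c * b :=
  (ediv_le_ediv_iff_cross hb0 hbt hd0 hdt).mp h

lemma div_le_div_of_cross {a b c d : ℕ∞} (h : a * d ≤ c * b)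
    (hb0 : b ≠ 0) (hbt : b ≠ ⊤) (hdt : d ≠ ⊤) (hc0 : d = 0 → c ≠ 0) :
    (a : ℝ≥0∞) / b ≤ (c : ℝ≥0∞) / d := by
  rcases eq_or_ne d 0 with rfl | hd0
  · have : (c : ℝ≥0∞) / ((0 : ℕ∞) : ℝ≥0∞) = ⊤ := by
      rw [ENat.toENNReal_zero, ENNReal.div_zero (enn_ne_zero (hc0 rfl))]
    rw [this]; exact le_top
  · exact (ediv_le_ediv_iff_cross hb0 hbt hd0 hdt).mpr h

lemma div_lt_div_of_num_lt {a c : ℕ∞} {b : ℕ∞} (h : a < c) (hb0 : b ≠ 0) (hbt : b ≠ ⊤) :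
    (a : ℝ≥0∞) / b < (c : ℝ≥0∞) / b := by
  rw [div_eq_mul_inv, div_eq_mul_inv]
  exact ENNReal.mul_lt_mul_left (by simpa using enn_ne_top hbt)
    (by simpa using enn_ne_zero hb0) (by exact_mod_cast h)


end Aux


section Decomp

variable {M : Matroid α} [M.Finite] {W' : Set α} {k : ℕ} {U : ℕ → Set α}

/-- each piece lies in the ground set of the corresponding contraction -/
lemma piece_subset (hdc : IsDensityDecomp (M ↾ W') k U) {j : ℕ} (hj : j < k) :
    U j ⊆ W' \ pre U j := by
  have h := (hdc.densest j hj).1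
  rwa [contract_ground, restrict_ground_eq] at h

lemma preU_subset (hdc : IsDensityDecomp (M ↾ W') k U) {j : ℕ} (hj : j ≤ k) :
    pre U j ⊆ W' := by
  induction j with
  | zero => rw [pre_zero]; exact empty_subset _
  | succ n ih =>
      rw [pre_succ]
      exact union_subset ((piece_subset hdc (by omega)).trans diff_subset) (ih (by omega))

/-- rank formula for the contractions appearing in the decomposition,
    expressed with ranks in the big matroid `M`. -/
lemma er_con (hW' : W' ⊆ M.E) {C Z : Set α} (hC : C ⊆ W') (hZ : Z ⊆ W' \ C) :
    er (contract (M ↾ W') C) Z + er M C = er M (Z ∪ C) := by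
  have h := er_contract_add (M := M ↾ W') (C := C) (X := Z)
    (by rwa [restrict_ground_eq]) (by rwa [restrict_ground_eq])
  rwa [er_restrict hC, er_restrict (union_subset (hZ.trans diff_subset) hC)] at h

lemma er_con_ne_top (hW' : W' ⊆ M.E) {C Z : Set α} (hC : C ⊆ W') (hZ : Z ⊆ W' \ C) :
    er (contract (M ↾ W') C) Z ≠ ⊤ := by
  have h := er_con hW' hC hZ
  intro ht
  rw [ht, top_add] at h
  exact er_ne_top h.symm

/-- flatness of the prefixes: the closure of a prefix meets `W'` only inside the prefix -/
lemma decomp_flat (hM : Loopless M) (hW' : W' ⊆ M.E)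
    (hdc : IsDensityDecomp (M ↾ W') k U) :
    ∀ s ≤ k, M.closure (pre U s) ∩ W' ⊆ pre U s := by
  intro s
  induction s with
  | zero =>
      intro _
      rw [pre_zero, closure_empty_of_loopless hM]
      exact (empty_inter _).subset
  | succ s ih =>
      intro hsk
      have hs : s < k := by omega
      have ihs := ih (by omega)
      rintro w ⟨hwc, hwW⟩
      by_contra hwP'
      have hPW : pre U s ⊆ W' := preU_subset hdc hs.le
      have hPE : pre U s ⊆ M.E := hPW.trans hW'
      rcases eq_empty_or_nonempty (U s) with hUe | hUs
      · rw [pre_succ, hUe, empty_union] at hwc hwP'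
        exact hwP' (ihs ⟨hwc, hwW⟩)
      have hUsub : U s ⊆ W' \ pre U s := piece_subset hdc hs
      have hwP : w ∉ pre U s := fun h => hwP' (by rw [pre_succ]; exact Or.inr h)
      have hwUs : w ∉ U s := fun h => hwP' (by rw [pre_succ]; exact Or.inl h)
      -- ranks
      have key1 := er_con hW' hPW hUsub
      have key2 := er_con hW' hPW
        (insert_subset ⟨hwW, hwP⟩ hUsub : insert w (U s) ⊆ W' \ pre U s)
      have hclo : w ∈ M.closure (U s ∪ pre U s) := by rwa [← pre_succ]
      have hins : er M (insert w (U s) ∪ pre U s) = er M (U s ∪ pre U s) := by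
        rw [insert_union]
        exact er_insert_eq_of_mem_closure hclo
          (union_subset ((hUsub.trans diff_subset).trans hW') hPE)
      rw [hins, ← key1] at key2
      have hPfin : er M (pre U s) ≠ ⊤ := er_ne_top
      have hereq : er (contract (M ↾ W') (pre U s)) (insert w (U s))
          = er (contract (M ↾ W') (pre U s)) (U s) := WithTop.add_right_cancel hPfin key2
      -- density comparison
      obtain ⟨v, hv⟩ := hUs
      have hflatv : v ∉ M.closure (pre U s) := by
        intro hc
        exact ((hUsub hv).2) (ihs ⟨hc, (hUsub hv).1⟩)
      have herv : er M (insert v (pre U s)) = er M (pre U s) + 1 :=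
        er_insert_of_not_mem_closure (hW' (hUsub hv).1) hflatv hPE
      have hv1 : er (contract (M ↾ W') (pre U s)) {v} = 1 := by
        have h := er_con hW' hPW (singleton_subset_iff.mpr (hUsub hv))
        rw [singleton_union, herv, add_comm (er M (pre U s)) 1] at h
        exact WithTop.add_right_cancel hPfin h
      have hr1 : 1 ≤ er (contract (M ↾ W') (pre U s)) (U s) := by
        rw [← hv1]
        exact er_mono (singleton_subset_iff.mpr hv)
      have hrt : er (contract (M ↾ W') (pre U s)) (U s) ≠ ⊤ := er_con_ne_top hW' hPW hUsub
      have hat : (U s).encard ≠ ⊤ :=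
        (M.set_finite (U s) ((hUsub.trans diff_subset).trans hW')).encard_lt_top.ne
      have hlt : dens (contract (M ↾ W') (pre U s)) (U s)
          < dens (contract (M ↾ W') (pre U s)) (insert w (U s)) := by
        rw [dens, dens, hereq, Set.encard_insert_of_notMem hwUs]
        refine div_lt_div_of_num_lt ?_ (by intro h; rw [h] at hr1; exact absurd hr1 (by simp)) hrt
        exact (ENat.add_one_le_iff hat).mp le_rfl
      have hle := (hdc.densest s hs).2.1 (insert w (U s)) (by
        rw [contract_ground, restrict_ground_eq]
        exact insert_subset ⟨hwW, hwP⟩ hUsub)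
      exact absurd hle (not_le.mpr hlt)


lemma er_con_one (hM : Loopless M) (hW' : W' ⊆ M.E) (hdc : IsDensityDecomp (M ↾ W') k U)
    {s : ℕ} (hs : s ≤ k) {w : α} (hw : w ∈ W' \ pre U s) :
    er (contract (M ↾ W') (pre U s)) {w} = 1 := by
  have hPW : pre U s ⊆ W' := preU_subset hdc hs
  have hPE : pre U s ⊆ M.E := hPW.trans hW'
  have hflat : w ∉ M.closure (pre U s) := fun hc =>
    hw.2 (decomp_flat hM hW' hdc s hs ⟨hc, hw.1⟩)
  have herv : er M (insert w (pre U s)) = er M (pre U s) + 1 :=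
    er_insert_of_not_mem_closure (hW' hw.1) hflat hPE
  have h := er_con hW' hPW (singleton_subset_iff.mpr hw)
  rw [singleton_union, herv, add_comm (er M (pre U s)) 1] at h
  exact WithTop.add_right_cancel er_ne_top h

lemma er_con_pos (hM : Loopless M) (hW' : W' ⊆ M.E) (hdc : IsDensityDecomp (M ↾ W') k U)
    {s : ℕ} (hs : s ≤ k) {Z : Set α} (hZ : Z ⊆ W' \ pre U s) (hne : Z.Nonempty) :
    1 ≤ er (contract (M ↾ W') (pre U s)) Z := by
  obtain ⟨v, hv⟩ := hne
  rw [← er_con_one hM hW' hdc hs (hZ hv)]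
  exact er_mono (singleton_subset_iff.mpr hv)

lemma dens_anti_succ (hM : Loopless M) (hW' : W' ⊆ M.E)
    (hdc : IsDensityDecomp (M ↾ W') k U) {i : ℕ} (hik : i + 1 < k) :
    dens (contract (M ↾ W') (pre U (i + 1))) (U (i + 1))
      ≤ dens (contract (M ↾ W') (pre U i)) (U i) := by
  have hik' : i < k := by omega
  have hU1 : U i ⊆ W' \ pre U i := piece_subset hdc hik'
  have hU2 : U (i + 1) ⊆ W' \ pre U (i + 1) := piece_subset hdc hik
  have hPW : pre U i ⊆ W' := preU_subset hdc hik'.le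
  have hP1W : pre U (i + 1) ⊆ W' := preU_subset hdc hik.le
  rcases eq_empty_or_nonempty (U (i + 1)) with hU2e | hU2ne
  · rw [hU2e, dens_empty]; exact zero_le
  rcases eq_empty_or_nonempty (U i) with hU1e | hU1ne
  · have hpre : pre U (i + 1) = pre U i := by rw [pre_succ, hU1e, empty_union]
    rw [hpre]
    refine (hdc.densest i hik').2.1 (U (i + 1)) ?_
    rw [contract_ground, restrict_ground_eq, ← hpre]
    exact hU2
  -- both pieces nonempty
  set a1 := (U i).encard with ha1
  set a2 := (U (i + 1)).encard with ha2
  set b1 := er (contract (M ↾ W') (pre U i)) (U i) with hb1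
  set b2 := er (contract (M ↾ W') (pre U (i + 1))) (U (i + 1)) with hb2
  have hZsub : U i ∪ U (i + 1) ⊆ W' \ pre U i :=
    union_subset hU1 (hU2.trans (diff_subset_diff_right (pre_mono U (by omega))))
  have e1 : b1 + er M (pre U i) = er M (pre U (i + 1)) := by
    rw [pre_succ U i]; exact er_con hW' hPW hU1
  have e2 : b2 + er M (pre U (i + 1)) = er M (pre U (i + 2)) := by
    rw [pre_succ U (i + 1)]; exact er_con hW' hP1W hU2
  have eZ : er (contract (M ↾ W') (pre U i)) (U i ∪ U (i + 1)) + er M (pre U i)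
      = er M (pre U (i + 2)) := by
    have hZP : (U i ∪ U (i + 1)) ∪ pre U i = pre U (i + 2) := by
      rw [pre_succ U (i + 1), pre_succ U i, union_comm (U i) (U (i + 1)), union_assoc]
    have h := er_con hW' hPW hZsub
    rwa [hZP] at h
  have eZ' : er (contract (M ↾ W') (pre U i)) (U i ∪ U (i + 1)) = b2 + b1 := by
    rw [← e1, ← add_assoc] at e2
    exact WithTop.add_right_cancel er_ne_top (eZ.trans e2.symm)
  have hdisj : Disjoint (U i) (U (i + 1)) := by
    refine disjoint_left.mpr fun x hx1 hx2 => (hU2 hx2).2 ?_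
    rw [pre_succ]; exact Or.inl hx1
  have hZcard : (U i ∪ U (i + 1)).encard = a1 + a2 := Set.encard_union_eq hdisj
  have hb1pos : 1 ≤ b1 := er_con_pos hM hW' hdc hik'.le hU1 hU1ne
  have hb2pos : 1 ≤ b2 := er_con_pos hM hW' hdc hik.le hU2 hU2ne
  have hb1t : b1 ≠ ⊤ := er_con_ne_top hW' hPW hU1
  have hb2t : b2 ≠ ⊤ := er_con_ne_top hW' hP1W hU2
  have hb10 : b1 ≠ 0 := by intro h; rw [h] at hb1pos; exact absurd hb1pos (by simp)
  have hb20 : b2 ≠ 0 := by intro h; rw [h] at hb2pos; exact absurd hb2pos (by simp)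
  have ha1t : a1 ≠ ⊤ := (M.set_finite (U i) ((hU1.trans diff_subset).trans hW')).encard_lt_top.ne
  have hmed := (hdc.densest i hik').2.1 (U i ∪ U (i + 1)) (by
    rw [contract_ground, restrict_ground_eq]; exact hZsub)
  rw [dens, dens, hZcard, eZ'] at hmed
  have hcross : (a1 + a2) * b1 ≤ a1 * (b2 + b1) := by
    refine cross_of_div_le hmed ?_ ?_ hb10 hb1t
    · exact (lt_of_lt_of_le zero_lt_one (hb2pos.trans le_self_add)).ne'
    · exact WithTop.add_ne_top.mpr ⟨hb2t, hb1t⟩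
  have hkey : a2 * b1 ≤ a1 * b2 := by
    rw [add_mul, mul_add] at hcross
    have h1 : a1 * b1 + a2 * b1 ≤ a1 * b1 + a1 * b2 := by
      rwa [add_comm (a1 * b2) (a1 * b1)] at hcross
    exact (WithTop.add_le_add_iff_left (WithTop.mul_ne_top ha1t hb1t)).mp h1
  rw [dens, dens]
  exact div_le_div_of_cross hkey hb20 hb2t hb1t (fun h => absurd h hb10)

lemma dens_anti (hM : Loopless M) (hW' : W' ⊆ M.E)
    (hdc : IsDensityDecomp (M ↾ W') k U) {i j : ℕ} (hij : i ≤ j) (hjk : j < k) :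
    dens (contract (M ↾ W') (pre U j)) (U j)
      ≤ dens (contract (M ↾ W') (pre U i)) (U i) := by
  induction j with
  | zero => rw [Nat.le_zero.mp hij]
  | succ n ih =>
      rcases Nat.lt_or_ge i (n + 1) with h | h
      · exact (dens_anti_succ hM hW' hdc hjk).trans (ih (by omega) (by omega))
      · rw [show i = n + 1 by omega]

end Decomp

open Classical in
lemma assocDens_eq_of_ex {M : Matroid α} {V' : Set α} {k : ℕ} {U : ℕ → Set α} {v : α}
    (h : ∃ j, j < k ∧ v ∈ M.closure (pre U (j + 1))) :
    assocDens M V' k U v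
      = dens (contract (M ↾ V') (pre U (Nat.find h))) (U (Nat.find h)) :=
  dif_pos h

open Classical in
lemma assocDens_eq_zero {M : Matroid α} {V' : Set α} {k : ℕ} {U : ℕ → Set α} {v : α}
    (h : ¬ ∃ j, j < k ∧ v ∈ M.closure (pre U (j + 1))) :
    assocDens M V' k U v = 0 :=
  dif_neg h

theorem assocDens_le_of_insert' (M : Matroid α) [M.Finite] (hM : Loopless M)
    (V' : Set α) (hV' : V' ⊆ M.E) (u : α) (hu : u ∈ M.E) (huV : u ∉ V') (k : ℕ)
    (Uold Unew : ℕ → Set α)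
    (hold : IsDensityDecomp (M ↾ V') k Uold)
    (hnew : IsDensityDecomp (M ↾ (insert u V')) k Unew) :
    ∀ v ∈ M.E, assocDens M V' k Uold v ≤ assocDens M (insert u V') k Unew v := by
  classical
  intro v hv
  by_cases h1 : ∃ j, j < k ∧ v ∈ M.closure (pre Uold (j + 1))
  swap
  · rw [assocDens_eq_zero h1]; exact zero_le
  rw [assocDens_eq_of_ex h1]
  have hE' : insert u V' ⊆ M.E := insert_subset hu hV'
  obtain ⟨hj₀k, hj₀v⟩ := Nat.find_spec h1
  set j₀ := Nat.find h1 with hj₀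
  set lam := dens (contract (M ↾ V') (pre Uold j₀)) (Uold j₀) with hlam_def
  -- the piece `Uold j₀` is nonempty
  have hUne : (Uold j₀).Nonempty := by
    rw [nonempty_iff_ne_empty]
    intro he
    have hpre : pre Uold (j₀ + 1) = pre Uold j₀ := by rw [pre_succ, he, empty_union]
    rcases Nat.eq_zero_or_pos j₀ with h0 | hpos
    · rw [hpre, h0, pre_zero, closure_empty_of_loopless hM] at hj₀v
      exact hj₀v
    · obtain ⟨m, hm⟩ : ∃ m, j₀ = m + 1 := ⟨j₀ - 1, by omega⟩
      rw [hpre, hm] at hj₀v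
      exact Nat.find_min h1 (by rw [← hj₀]; omega) ⟨by omega, hj₀v⟩
  -- choose the threshold index s in the new decomposition
  have hs_ex : ∃ s, s ≤ k ∧
      (∀ i < s, lam ≤ dens (contract (M ↾ (insert u V')) (pre Unew i)) (Unew i)) ∧
      (s = k ∨ (s < k ∧
        dens (contract (M ↾ (insert u V')) (pre Unew s)) (Unew s) < lam)) := by
    by_cases hall : ∀ i < k, lam ≤ dens (contract (M ↾ (insert u V')) (pre Unew i)) (Unew i)
    · exact ⟨k, le_rfl, hall, Or.inl rfl⟩
    · push_neg at hall
      obtain ⟨i, hik, hilt⟩ := hall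
      have hQ : ∃ i, i < k ∧
          dens (contract (M ↾ (insert u V')) (pre Unew i)) (Unew i) < lam := ⟨i, hik, hilt⟩
      refine ⟨Nat.find hQ, (Nat.find_spec hQ).1.le, fun i hi => ?_,
        Or.inr (Nat.find_spec hQ)⟩
      by_contra hc
      exact Nat.find_min hQ hi ⟨by have := (Nat.find_spec hQ).1; omega, not_le.mp hc⟩
  obtain ⟨s, hsk, hsall, hslast⟩ := hs_ex
  -- main claim: old prefixes are contained in `pre Unew s`
  have claim : ∀ j ≤ k, (∀ j' < j,
      lam ≤ dens (contract (M ↾ V') (pre Uold j')) (Uold j')) →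
      pre Uold j ⊆ pre Unew s := by
    intro j
    induction j with
    | zero => intro _ _; rw [pre_zero]; exact empty_subset _
    | succ j ih =>
      intro hjk hmono
      have hj : j < k := by omega
      have ihs : pre Uold j ⊆ pre Unew s := ih (by omega) fun j' hj' => hmono j' (by omega)
      rw [pre_succ]
      refine union_subset ?_ ihs
      rcases eq_empty_or_nonempty (Uold j) with hXe | hXne
      · rw [hXe]; exact empty_subset _
      by_contra hnot
      have hX2ne : (Uold j \ pre Unew s).Nonempty := by
        rw [nonempty_iff_ne_empty]
        intro h
        exact hnot (diff_eq_empty.mp h)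
      rcases hslast with rfl | ⟨hsk', hlt⟩
      · refine hnot (((piece_subset hold hj).trans diff_subset).trans ?_)
        rw [hnew.cover, restrict_ground_eq]
        exact subset_insert u V'
      -- notation
      have hXV : Uold j ⊆ V' \ pre Uold j := piece_subset hold hj
      have hPV : pre Uold j ⊆ V' := preU_subset hold hj.le
      have hQE' : pre Unew s ⊆ insert u V' := preU_subset hnew hsk
      have hYsub : Uold j ∩ pre Unew s ⊆ V' \ pre Uold j := inter_subset_left.trans hXV
      have hX2sub : Uold j \ pre Unew s ⊆ (insert u V') \ pre Unew s :=
        diff_subset_diff_left (((hXV.trans diff_subset)).trans (subset_insert u V'))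
      set X := Uold j with hXdef
      set Pj := pre Uold j with hPjdef
      set Qs := pre Unew s with hQsdef
      set Y := X ∩ Qs with hYdef
      set X2 := X \ Qs with hX2def
      set a := X.encard with hadef
      set b := er (contract (M ↾ V') Pj) X with hbdef
      set c := er (contract (M ↾ V') Pj) Y with hcdef
      set d := er (contract (M ↾ (insert u V')) Qs) X2 with hddef
      have e1 : b + er M Pj = er M (X ∪ Pj) := er_con hV' hPV hXV
      have e2 : c + er M Pj = er M (Y ∪ Pj) := er_con hV' hPV hYsub
      have e3 : d + er M Qs = er M (X2 ∪ Qs) := er_con hE' hQE' hX2sub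
      have haT : a ≠ ⊤ :=
        (M.set_finite X ((hXV.trans diff_subset).trans hV')).encard_lt_top.ne
      have hbT : b ≠ ⊤ := er_con_ne_top hV' hPV hXV
      have hcT : c ≠ ⊤ := er_con_ne_top hV' hPV hYsub
      have hdT : d ≠ ⊤ := er_con_ne_top hE' hQE' hX2sub
      have hb1 : 1 ≤ b := er_con_pos hM hV' hold hj.le hXV hXne
      have hb0 : b ≠ 0 := (lt_of_lt_of_le zero_lt_one hb1).ne'
      have hlam : lam ≤ (a : ℝ≥0∞) / (b : ℝ≥0∞) := hmono j (by omega)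
      -- step (ii)
      have hYb : Y.encard * b ≤ a * c := by
        rcases eq_empty_or_nonempty Y with hYe | hYne
        · rw [hYe]; simp
        · have hc1 : 1 ≤ c := er_con_pos hM hV' hold hj.le hYsub hYne
          have hdY := (hold.densest j hj).2.1 Y (by
            rw [contract_ground, restrict_ground_eq]; exact hYsub)
          rw [dens, dens] at hdY
          exact cross_of_div_le hdY ((lt_of_lt_of_le zero_lt_one hc1).ne') hcT hb0 hbT
      -- step (iii): d + c ≤ b via submodularity
      have hXPE : X ∪ Pj ⊆ M.E := union_subset ((hXV.trans diff_subset).trans hV')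
        (hPV.trans hV')
      have hQsE : Qs ⊆ M.E := hQE'.trans hE'
      have hAB := er_submod (M := M) (X := X ∪ Pj) (Y := Qs) hXPE hQsE
      have m1 : er M (X2 ∪ Qs) ≤ er M ((X ∪ Pj) ∪ Qs) :=
        er_mono (union_subset_union_left _ (diff_subset.trans subset_union_left))
      have m2 : er M (Y ∪ Pj) ≤ er M ((X ∪ Pj) ∩ Qs) :=
        er_mono (union_subset
          (subset_inter (inter_subset_left.trans subset_union_left) inter_subset_right)
          (subset_inter subset_union_right ihs))
      have H : (d + er M Qs) + (c + er M Pj) ≤ (b + er M Pj) + er M Qs := by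
        rw [e1, e2, e3]
        exact (add_le_add m1 m2).trans hAB
      have hsubdc : d + c ≤ b := by
        have H2 : (d + c) + (er M Qs + er M Pj) ≤ b + (er M Qs + er M Pj) := by
          calc (d + c) + (er M Qs + er M Pj) = (d + er M Qs) + (c + er M Pj) := by ring
            _ ≤ (b + er M Pj) + er M Qs := H
            _ = b + (er M Qs + er M Pj) := by ring
        exact (WithTop.add_le_add_iff_right
          (WithTop.add_ne_top.mpr ⟨er_ne_top, er_ne_top⟩)).mp H2
      -- step (iv)
      have hsplit : X2.encard + Y.encard = a := Set.encard_diff_add_encard_inter X Qs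
      have hiv : a * d ≤ X2.encard * b := by
        have h1 : a * d + a * c ≤ a * b := by
          rw [← mul_add]; exact mul_le_mul_right hsubdc a
        have h2 : a * b = X2.encard * b + Y.encard * b := by rw [← add_mul, hsplit]
        have h3 : a * d + a * c ≤ X2.encard * b + a * c := by
          rw [h2] at h1
          exact h1.trans (add_le_add_right hYb _)
        exact (WithTop.add_le_add_iff_right (WithTop.mul_ne_top haT hcT)).mp h3
      -- step (v)
      have hX20 : X2.encard ≠ 0 := by
        rw [Set.encard_ne_zero]; exact hX2ne
      have hv5 : (a : ℝ≥0∞) / (b : ℝ≥0∞) ≤ dens (contract (M ↾ (insert u V')) Qs) X2 := by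
        rw [dens]
        exact div_le_div_of_cross hiv hb0 hbT hdT fun _ => hX20
      have hmax := (hnew.densest s hsk').2.1 X2 (by
        rw [contract_ground, restrict_ground_eq]; exact hX2sub)
      exact absurd ((hlam.trans hv5).trans hmax) (not_le.mpr hlt)
  -- final assembly
  have hmono : ∀ j' < j₀ + 1,
      lam ≤ dens (contract (M ↾ V') (pre Uold j')) (Uold j') :=
    fun j' hj' => dens_anti hM hV' hold (by omega) hj₀k
  have hincl := claim (j₀ + 1) (by omega) hmono
  have hvQ : v ∈ M.closure (pre Unew s) := M.closure_subset_closure hincl hj₀v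
  have hs0 : s ≠ 0 := by
    rintro rfl
    rw [pre_zero, closure_empty_of_loopless hM] at hvQ
    exact hvQ
  obtain ⟨s', rfl⟩ : ∃ s', s = s' + 1 := ⟨s - 1, by omega⟩
  have hnew_ex : ∃ i, i < k ∧ v ∈ M.closure (pre Unew (i + 1)) := ⟨s', by omega, hvQ⟩
  rw [assocDens_eq_of_ex hnew_ex]
  have hfind : Nat.find hnew_ex ≤ s' := Nat.find_le ⟨by omega, hvQ⟩
  exact hsall _ (by omega)


/-- adding an element to `V'` can only increase associated densities. -/
theorem assocDens_le_of_insert (M : Matroid α) [M.Finite] (hM : Loopless M)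
    (V' : Set α) (hV' : V' ⊆ M.E) (u : α) (hu : u ∈ M.E) (huV : u ∉ V') (k : ℕ)
    (Uold Unew : ℕ → Set α)
    (hold : IsDensityDecomp (M ↾ V') k Uold)
    (hnew : IsDensityDecomp (M ↾ (insert u V')) k Unew) :
    ∀ v ∈ M.E, assocDens M V' k Uold v ≤ assocDens M (insert u V') k Unew v :=
  assocDens_le_of_insert' M hM V' hV' u hu huV k Uold Unew hold hnew

end MatroidDCS
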